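/- Let f ∈ L²(0,1) and g = Proj_K(f) its L²-projection onto the cone K of nondecreasing functions. Then Ω_f ⊆ Ω_g, where Ω_u denotes the open subset of (0,1) where u is locally essentially constant. Consequently H_g ⊆ H_f. -/

import Mathlib

open MeasureTheory Set Filter

noncomputable section

/-- Lebesgue measure restricted to the interval (0,1). -/
def μ01 : MeasureTheory.Measure ℝ := MeasureTheory.volume.restrict (Set.Ioo 0 1)

/-- The convex cone `K` of (essentially) nondecreasing functions in L²(0,1). -/
def coneK : Set (ℝ → ℝ) := {g | MonotoneOn g (Set.Ioo 0 1) ∧ MeasureTheory.MemLp g 2 μ01}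

/-- `g` is the L²(0,1)-orthogonal projection of `f` onto the cone `K`,
characterized by the variational inequality `⟨f - g, z - g⟩ ≤ 0` for all `z ∈ K`. -/
def IsProjK (f g : ℝ → ℝ) : Prop :=
  g ∈ coneK ∧ ∀ z ∈ coneK, (∫ w in Set.Ioo (0:ℝ) 1, (f w - g w) * (z w - g w)) ≤ 0

/-- The convex envelope of `F` on `[0,1]`: the supremum of affine functions below `F` there. -/
def convEnv (F : ℝ → ℝ) (w : ℝ) : ℝ :=
  sSup {y | ∃ a b : ℝ, y = a + b * w ∧ ∀ v ∈ Set.Icc (0:ℝ) 1, a + b * v ≤ F v}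

/-- The open set `Ω_g ⊆ (0,1)` of points near which `g` is essentially constant. -/
def locConstSet (g : ℝ → ℝ) : Set ℝ :=
  {w | w ∈ Set.Ioo (0:ℝ) 1 ∧ ∃ a b c : ℝ, a < w ∧ w < b ∧
    ∀ᵐ x ∂μ01, x ∈ Set.Ioo a b → g x = c}

/-- The closed subspace `H_g` of L²(0,1) functions essentially constant on each
open interval contained in `Ω_g`. -/
def Hspace (g : ℝ → ℝ) : Set (ℝ → ℝ) :=
  {u | MeasureTheory.MemLp u 2 μ01 ∧ ∀ a b : ℝ, Set.Ioo a b ⊆ locConstSet g →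
    ∃ c : ℝ, ∀ᵐ x ∂μ01, x ∈ Set.Ioo a b → u x = c}

/-- `ξ` belongs to the subdifferential `∂I_K(g)` of the indicator function of `K` at `g ∈ K`. -/
def subdiffIK (g ξ : ℝ → ℝ) : Prop :=
  g ∈ coneK ∧ ∀ z ∈ coneK, (∫ w in Set.Ioo (0:ℝ) 1, ξ w * (z w - g w)) ≤ 0

/-!
Where `f` equals a constant `c` on an interval `(p, q)`, replacing the projection `g` on `(p, q)` by
the constant `β = max (g p) (min c (g q))` keeps it nondecreasing. Since `β` is the projection of
`c` onto `[g p, g q] ∋ g x`, the variational inequality for this competitor bounds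
`∫ (β - g)²` over `(p, q)` by `∫ (c - g) (β - g) ≤ 0`, so `g = β` a.e. on `(p, q)`.
-/

theorem MonotoneOn.piecewise_Ioo_const {α β : Type*} [LinearOrder α] [Preorder β] {g : α → β}
    {s : Set α} (hg : MonotoneOn g s) {p q : α} (hp : p ∈ s) (hq : q ∈ s) {b : β}
    (hpb : g p ≤ b) (hbq : b ≤ g q) :
    MonotoneOn ((Ioo p q).piecewise (fun _ => b) g) s := by
  intro x hx y hy hxy
  by_cases hxI : x ∈ Ioo p q <;> by_cases hyI : y ∈ Ioo p q <;>
    simp only [piecewise_eq_of_mem, piecewise_eq_of_notMem, hxI, hyI, not_false_eq_true]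
  · exact le_rfl
  · have hqy : q ≤ y := by
      by_contra! h
      exact hyI ⟨hxI.1.trans_le hxy, h⟩
    exact hbq.trans (hg hq hy hqy)
  · have hxp : x ≤ p := by
      by_contra! h
      exact hxI ⟨h, hxy.trans_lt hyI.2⟩
    exact (hg hx hp hxp).trans hpb
  · exact hg hx hy hxy

theorem sq_max_min_sub_le_mul {a b c y : ℝ} (hy : y ∈ Icc a b) :
    (max a (min c b) - y) ^ 2 ≤ (c - y) * (max a (min c b) - y) := by
  obtain ⟨hay, hyb⟩ := hy
  have key : 0 ≤ (c - max a (min c b)) * (max a (min c b) - y) := by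
    rcases le_total c b with hcb | hbc
    · rw [min_eq_left hcb]
      rcases le_total a c with hac | hca
      · simp [max_eq_right hac]
      · rw [max_eq_left hca]
        exact mul_nonneg_of_nonpos_of_nonpos (by linarith) (by linarith)
    · rw [min_eq_right hbc, max_eq_right (hay.trans hyb)]
      exact mul_nonneg (by linarith) (by linarith)
  nlinarith [key]

instance : IsFiniteMeasure μ01 := by
  unfold μ01; infer_instance

theorem IsProjK.setIntegral_mul_sub_nonpos {f g : ℝ → ℝ} (hg : IsProjK f g) {p q b : ℝ}
    (hp : p ∈ Ioo 0 1) (hq : q ∈ Ioo 0 1) (hpb : g p ≤ b) (hbq : b ≤ g q) :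
    ∫ x in Ioo p q, (f x - g x) * (b - g x) ≤ 0 := by
  obtain ⟨⟨hmono, hL2⟩, hvar⟩ := hg
  set z := (Ioo p q).piecewise (fun _ => b) g
  have hz : z ∈ coneK :=
    ⟨hmono.piecewise_Ioo_const hp hq hpb hbq,
      (memLp_const b).piecewise measurableSet_Ioo (hL2.mono_measure Measure.restrict_le_self)⟩
  calc ∫ x in Ioo p q, (f x - g x) * (b - g x)
      = ∫ x in Ioo p q, (f x - g x) * (z x - g x) :=
        setIntegral_congr_fun measurableSet_Ioo fun x hx => by simp [z, hx]
    _ = ∫ x in Ioo 0 1, (f x - g x) * (z x - g x) := by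
        refine (setIntegral_eq_of_subset_of_forall_sdiff_eq_zero measurableSet_Ioo
          (Ioo_subset_Ioo hp.1.le hq.2.le) fun x hx => ?_).symm
        simp [z, hx.2]
    _ ≤ 0 := hvar z hz

theorem IsProjK.ae_eq_const_of_ae_eq_const {f g : ℝ → ℝ} (hg : IsProjK f g) {p q c : ℝ}
    (hp : p ∈ Ioo 0 1) (hq : q ∈ Ioo 0 1) (hpq : p ≤ q)
    (hf : ∀ᵐ x ∂μ01, x ∈ Ioo p q → f x = c) :
    ∀ᵐ x ∂μ01, x ∈ Ioo p q → g x = max (g p) (min c (g q)) := by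
  set β := max (g p) (min c (g q))
  have hmono := hg.1.1
  have hsub : Ioo p q ⊆ Ioo 0 1 := Ioo_subset_Ioo hp.1.le hq.2.le
  have hν : μ01.restrict (Ioo p q) = volume.restrict (Ioo p q) := by
    rw [μ01, Measure.restrict_restrict measurableSet_Ioo, inter_eq_left.2 hsub]
  rw [← ae_restrict_iff' measurableSet_Ioo, hν] at hf ⊢
  have hgL2 : MemLp g 2 (volume.restrict (Ioo p q)) := hν ▸ hg.1.2.restrict _
  have hsq_int : Integrable (fun x => (β - g x) ^ 2) (volume.restrict (Ioo p q)) :=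
    ((memLp_const β).sub hgL2).integrable_sq
  have hmul_int : Integrable (fun x => (c - g x) * (β - g x)) (volume.restrict (Ioo p q)) :=
    ((memLp_const c).sub hgL2).integrable_mul ((memLp_const β).sub hgL2)
  have hle : ∫ x in Ioo p q, (β - g x) ^ 2 ≤ 0 := calc
    _ ≤ ∫ x in Ioo p q, (c - g x) * (β - g x) :=
      setIntegral_mono_on hsq_int hmul_int measurableSet_Ioo fun x hx =>
        sq_max_min_sub_le_mul ⟨hmono hp (hsub hx) hx.1.le, hmono (hsub hx) hq hx.2.le⟩
    _ = ∫ x in Ioo p q, (f x - g x) * (β - g x) :=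
      integral_congr_ae (by filter_upwards [hf] with x hx; rw [hx])
    _ ≤ 0 := hg.setIntegral_mul_sub_nonpos hp hq (le_max_left _ _)
      (max_le (hmono hp hq hpq) (min_le_right _ _))
  have hsq_zero := (integral_eq_zero_iff_of_nonneg (fun x => sq_nonneg _) hsq_int).1
    (le_antisymm hle (integral_nonneg fun x => sq_nonneg _))
  filter_upwards [hsq_zero] with x hx
  linarith [pow_eq_zero_iff (n := 2) two_ne_zero |>.1 hx]

theorem IsProjK.locConstSet_subset {f g : ℝ → ℝ} (hg : IsProjK f g) :
    locConstSet f ⊆ locConstSet g := by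
  rintro w ⟨hw, a, b, c, haw, hwb, hf⟩
  set p := max a (w / 2)
  set q := min b ((w + 1) / 2)
  have hpw : p < w := max_lt haw (by linarith [hw.1])
  have hwq : w < q := lt_min hwb (by linarith [hw.2])
  have hp : p ∈ Ioo 0 1 := ⟨lt_max_of_lt_right (by linarith [hw.1]), hpw.trans hw.2⟩
  have hq : q ∈ Ioo 0 1 := ⟨hw.1.trans hwq, min_lt_of_right_lt (by linarith [hw.2])⟩
  have hfpq : ∀ᵐ x ∂μ01, x ∈ Ioo p q → f x = c := by
    filter_upwards [hf] with x hx hxI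
    exact hx (Ioo_subset_Ioo (le_max_left _ _) (min_le_left _ _) hxI)
  exact ⟨hw, p, q, _, hpw, hwq, hg.ae_eq_const_of_ae_eq_const hp hq (hpw.trans hwq).le hfpq⟩

theorem Hspace_anti {f g : ℝ → ℝ} (h : locConstSet f ⊆ locConstSet g) : Hspace g ⊆ Hspace f :=
  fun _ hu => ⟨hu.1, fun a b hab => hu.2 a b (hab.trans h)⟩

theorem stmt12_general (f g : ℝ → ℝ)
    (hg : IsProjK f g) :
    locConstSet f ⊆ locConstSet g ∧ Hspace g ⊆ Hspace f :=
  ⟨hg.locConstSet_subset, Hspace_anti hg.locConstSet_subset⟩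

theorem stmt12 (f g : ℝ → ℝ) (hf : MeasureTheory.MemLp f 2 μ01)
    (hg : IsProjK f g) :
    locConstSet f ⊆ locConstSet g ∧ Hspace g ⊆ Hspace f :=
  stmt12_general f g hg
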